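/- (Theorem 2, Case 2.) Fix a horizontal position x̂ ∈ [0,D], let 0 < h_min ≤ h_max, and assume X > 0 and x̂ > Ψʰ. If there exists h₀ ∈ [h_min,h_max] with SIR1(x̂,h₀) = SIR2(x̂,h₀), then SIR_S(x̂,h) ≤ SIR_S(x̂,h₀) for every h ∈ [h_min,h_max]; that is, the optimal altitude is h* = h₀. -/
import Mathlib


/-- SIR at the UAV located at (x,0,h). -/
noncomputable def SIR1 (pt pM X Y x h : ℝ) : ℝ :=
  pt * ((x - X) ^ 2 + Y ^ 2 + h ^ 2) / (pM * (x ^ 2 + h ^ 2))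

/-- SIR at the Rx when the UAV is located at (x,0,h). -/
noncomputable def SIR2 (pu κ pM D X Y x h : ℝ) : ℝ :=
  pu * κ * (Y ^ 2 + (D - X) ^ 2) / (pM * ((D - x) ^ 2 + h ^ 2))

/-- SIR of the system. -/
noncomputable def SIRS (pt pu κ pM D X Y x h : ℝ) : ℝ :=
  min (SIR1 pt pM X Y x h) (SIR2 pu κ pM D X Y x h)

/-- The threshold Ψʰ. -/
noncomputable def PsiH (X Y : ℝ) : ℝ := (X ^ 2 + Y ^ 2) / (2 * X)

theorem stmt12 (D X Y pt pu pM κ hmin hmax : ℝ) (hD : 0 < D) (hX0 : 0 ≤ X) (hXD : X ≤ D)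
    (hpt : 0 < pt) (hpu : 0 < pu) (hpM : 0 < pM) (hκ : 0 < κ)
    (hhmin : 0 < hmin) (hhm : hmin ≤ hmax)
    (xhat : ℝ) (hxhat : xhat ∈ Set.Icc (0 : ℝ) D)
    (hX : 0 < X) (hcase : xhat > PsiH X Y)
    (h₀ : ℝ) (hh₀ : h₀ ∈ Set.Icc hmin hmax)
    (hcross : SIR1 pt pM X Y xhat h₀ = SIR2 pu κ pM D X Y xhat h₀) :
    ∀ h ∈ Set.Icc hmin hmax,
      SIRS pt pu κ pM D X Y xhat h ≤ SIRS pt pu κ pM D X Y xhat h₀ := by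
  intro h hh
  obtain ⟨hh1, hh2⟩ := hh
  obtain ⟨hh₀1, hh₀2⟩ := hh₀
  have hhpos : 0 < h := lt_of_lt_of_le hhmin hh1
  have hh₀pos : 0 < h₀ := lt_of_lt_of_le hhmin hh₀1
  -- A < B from xhat > PsiH
  have hAB : (xhat - X) ^ 2 + Y ^ 2 < xhat ^ 2 := by
    have : (X ^ 2 + Y ^ 2) / (2 * X) < xhat := hcase
    nlinarith [(div_lt_iff₀ (by linarith : (0:ℝ) < 2 * X)).mp this]
  have hden1 : ∀ z : ℝ, 0 < z → 0 < pM * (xhat ^ 2 + z ^ 2) := by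
    intro z hz; positivity
  have hden2 : ∀ z : ℝ, 0 < z → 0 < pM * ((D - xhat) ^ 2 + z ^ 2) := by
    intro z hz; positivity
  have hC : 0 ≤ pu * κ * (Y ^ 2 + (D - X) ^ 2) := by positivity
  -- min value at h₀ equals SIR1 h₀
  have hmineq : SIRS pt pu κ pM D X Y xhat h₀ = SIR1 pt pM X Y xhat h₀ := by
    unfold SIRS; rw [hcross]; simp
  rcases le_total h h₀ with hle | hge
  · -- SIRS h ≤ SIR1 h ≤ SIR1 h₀
    have : SIR1 pt pM X Y xhat h ≤ SIR1 pt pM X Y xhat h₀ := by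
      unfold SIR1
      rw [div_le_div_iff₀ (hden1 h hhpos) (hden1 h₀ hh₀pos)]
      have hsq : h ^ 2 ≤ h₀ ^ 2 := by nlinarith
      nlinarith [mul_nonneg (mul_nonneg (mul_pos hpt hpM).le (sub_nonneg.mpr hsq))
        (sub_pos.mpr hAB).le]
    calc SIRS pt pu κ pM D X Y xhat h ≤ SIR1 pt pM X Y xhat h := min_le_left _ _
      _ ≤ SIR1 pt pM X Y xhat h₀ := this
      _ = SIRS pt pu κ pM D X Y xhat h₀ := hmineq.symm
  · -- SIRS h ≤ SIR2 h ≤ SIR2 h₀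
    have : SIR2 pu κ pM D X Y xhat h ≤ SIR2 pu κ pM D X Y xhat h₀ := by
      unfold SIR2
      rw [div_le_div_iff₀ (hden2 h hhpos) (hden2 h₀ hh₀pos)]
      have hsq : h₀ ^ 2 ≤ h ^ 2 := by nlinarith
      nlinarith [mul_nonneg (mul_nonneg hC hpM.le) (sub_nonneg.mpr hsq)]
    calc SIRS pt pu κ pM D X Y xhat h ≤ SIR2 pu κ pM D X Y xhat h := min_le_right _ _
      _ ≤ SIR2 pu κ pM D X Y xhat h₀ := this
      _ = SIR1 pt pM X Y xhat h₀ := hcross.symm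
      _ = SIRS pt pu κ pM D X Y xhat h₀ := hmineq.symm
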